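/- If P[X > t] ≤ P[Y > t]/p for all real t with p ∈ (0,1], then there exists a coupling of X and Y such that P[X ≤ Y | X] ≥ p almost surely. -/

import Mathlib

/-!
Let `Q_μ` be the quantile function of `μ` and `U` uniform on `(0, 1)`. In terms of cdfs the
hypothesis reads `F_Y ≤ 1 - p + p F_X`, which gives `Q_X u ≤ Q_Y (1 - p + p u)`. So with
probability `p` we couple `X = Q_X U` monotonically with `Y = Q_Y (1 - p + p U)`, the upper
`p`-part of the law of `Y`, and with probability `1 - p` we take `X ~ μX` independent of a `Y`
drawn from the lower `(1 - p)`-part. The first component alone puts mass at least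
`p · P[X ∈ A]` on `{X ≤ Y, X ∈ A}` for every Borel `A`, which is the bound on `P[X ≤ Y | X]`.
-/

open MeasureTheory ProbabilityTheory Set Filter Topology

lemma MeasureTheory.ae_const_le_condExp {α : Type*} {m m₀ : MeasurableSpace α} {μ : Measure α}
    [IsFiniteMeasure μ] (hm : m ≤ m₀) {f : α → ℝ} (hf : Integrable f μ) {c : ℝ}
    (h : ∀ s, MeasurableSet[m] s → c * μ.real s ≤ ∫ x in s, f x ∂μ) :
    ∀ᵐ x ∂μ, c ≤ μ[f|m] x := by
  refine ae_le_of_ae_le_trim (hm := hm) (ae_le_of_forall_setIntegral_le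
    ((integrable_const c).trim hm stronglyMeasurable_const)
    (integrable_condExp.trim hm stronglyMeasurable_condExp) fun s hs _ => ?_)
  rw [← setIntegral_trim hm stronglyMeasurable_const hs,
    ← setIntegral_trim hm stronglyMeasurable_condExp hs, setIntegral_condExp hm hf hs,
    setIntegral_const, smul_eq_mul, mul_comm]
  exact h s hs

lemma MeasureTheory.ae_le_condExp_indicator_comap_fst {α β : Type*} [MeasurableSpace α]
    [MeasurableSpace β] {π : Measure (α × β)} [IsFiniteMeasure π] {B : Set (α × β)}
    (hB : MeasurableSet B) {c : ℝ}
    (h : ∀ A, MeasurableSet A → c * π.real (Prod.fst ⁻¹' A) ≤ π.real (B ∩ Prod.fst ⁻¹' A)) :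
    ∀ᵐ z ∂π, c ≤
      (π[B.indicator (fun _ => (1 : ℝ)) | MeasurableSpace.comap Prod.fst inferInstance]) z := by
  refine ae_const_le_condExp measurable_fst.comap_le ((integrable_const 1).indicator hB) ?_
  rintro _ ⟨A, hA, rfl⟩
  rw [integral_indicator hB, setIntegral_const, smul_eq_mul, mul_one,
    measureReal_restrict_apply hB]
  exact h A hA

lemma Real.map_volume_restrict_Ioo_affine (a : ℝ) {c : ℝ} (hc : 0 < c) :
    (volume.restrict (Ioo 0 1)).map (fun u => a + c * u) =
      ENNReal.ofReal c⁻¹ • volume.restrict (Ioo a (a + c)) := by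
  have hmap : volume.map (fun u => a + c * u) = ENNReal.ofReal c⁻¹ • volume := by
    rw [show (fun u => a + c * u) = (a + ·) ∘ (c * ·) from rfl,
      ← Measure.map_map (measurable_const_add a) (measurable_const_mul c),
      Real.map_volume_mul_left hc.ne', Measure.map_smul, map_add_left_eq_self,
      abs_of_pos (inv_pos.mpr hc)]
  have hpre : (fun u => a + c * u) ⁻¹' Ioo a (a + c) = Ioo 0 1 := by
    ext u
    simp only [mem_preimage, mem_Ioo]
    constructor <;> rintro ⟨h₀, h₁⟩ <;> constructor <;> nlinarith
  rw [← hpre, ← Measure.restrict_map (by fun_prop) measurableSet_Ioo, hmap,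
    Measure.restrict_smul]

lemma Real.volume_restrict_Ioo_add_Ioo {a b c : ℝ} (hab : a ≤ b) (hbc : b ≤ c) :
    volume.restrict (Ioo a b) + volume.restrict (Ioo b c) = volume.restrict (Ioo a c) := by
  simp only [Measure.restrict_congr_set Ioo_ae_eq_Ioc]
  rw [← Measure.restrict_union (Ioc_disjoint_Ioc_of_le le_rfl) measurableSet_Ioc,
    Ioc_union_Ioc_eq_Ioc hab hbc]

namespace ProbabilityTheory

-- Meaningful for `u ∈ (0, 1)` only; elsewhere `sInf` returns junk values.
noncomputable def quantile (μ : Measure ℝ) (u : ℝ) : ℝ := sInf {x | u ≤ cdf μ x}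

section Quantile

variable (μ : Measure ℝ) {u : ℝ}

lemma bddBelow_le_cdf (hu : 0 < u) : BddBelow {x | u ≤ cdf μ x} := by
  obtain ⟨x₀, hx₀⟩ :=
    eventually_atBot.mp ((tendsto_cdf_atBot μ).eventually (eventually_lt_nhds hu))
  exact ⟨x₀, fun y hy => le_of_not_gt fun hyx => (hx₀ y hyx.le).not_ge hy⟩

lemma nonempty_le_cdf (hu : u < 1) : {x | u ≤ cdf μ x}.Nonempty :=
  ((tendsto_cdf_atTop μ).eventually (eventually_ge_nhds hu)).exists

lemma le_cdf_quantile (hu : u ∈ Ioo 0 1) : u ≤ cdf μ (quantile μ u) := by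
  refine ge_of_tendsto
    ((cdf μ).right_continuous _ |>.mono_left (nhdsWithin_mono _ Ioi_subset_Ici_self))
    (eventually_nhdsWithin_of_forall fun y hy => ?_)
  obtain ⟨z, hz, hzy⟩ := exists_lt_of_csInf_lt (nonempty_le_cdf μ hu.2) hy
  exact hz.trans (monotone_cdf μ hzy.le)

lemma quantile_le_iff (hu : u ∈ Ioo 0 1) {x : ℝ} : quantile μ u ≤ x ↔ u ≤ cdf μ x :=
  ⟨fun hx => (le_cdf_quantile μ hu).trans (monotone_cdf μ hx),
    fun hx => csInf_le (bddBelow_le_cdf μ hu.1) hx⟩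

lemma quantile_of_notMem_Ioc (hu : u ∉ Ioc 0 1) : quantile μ u = 0 := by
  rcases le_or_gt u 0 with hu0 | hu0
  · have : {x | u ≤ cdf μ x} = univ := eq_univ_of_forall fun x => hu0.trans (cdf_nonneg μ x)
    rw [quantile, this, Real.sInf_of_not_bddBelow not_bddBelow_univ]
  · have hu1 : 1 < u := lt_of_not_ge fun h => hu ⟨hu0, h⟩
    have : {x | u ≤ cdf μ x} = ∅ :=
      eq_empty_of_forall_notMem fun x hx => (cdf_le_one μ x).not_gt (hu1.trans_le hx)
    rw [quantile, this, Real.sInf_empty]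

lemma measurable_quantile : Measurable (quantile μ) := by
  refine measurable_of_Iic fun x => ?_
  have : quantile μ ⁻¹' Iic x = (Ioo 0 1 ∩ Iic (cdf μ x)) ∪ ({1} ∩ quantile μ ⁻¹' Iic x) ∪
      ((Ioc 0 1)ᶜ ∩ {_u | 0 ≤ x}) := by
    ext u
    by_cases hu : u ∈ Ioo 0 1
    · simp [hu, quantile_le_iff μ hu, hu.2.ne, hu.1, hu.2.not_gt]
    by_cases hu1 : u = 1
    · simp [hu1]
    have hu' : u ∉ Ioc 0 1 := fun h => hu ⟨h.1, lt_of_le_of_ne h.2 hu1⟩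
    simp [hu, hu1, hu', quantile_of_notMem_Ioc μ hu']
  rw [this]
  exact ((measurableSet_Ioo.inter measurableSet_Iic).union
    ((subsingleton_singleton.anti inter_subset_left).measurableSet)).union
    (measurableSet_Ioc.compl.inter (MeasurableSet.const _))

lemma map_quantile [IsProbabilityMeasure μ] :
    (volume.restrict (Ioo 0 1)).map (quantile μ) = μ := by
  refine Measure.ext_of_Iic _ _ fun x => ?_
  have hpre : quantile μ ⁻¹' Iic x ∩ Ioo 0 1 = Ioo 0 1 ∩ Iic (cdf μ x) := by
    ext u
    simp only [mem_inter_iff, mem_preimage, mem_Iic]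
    exact ⟨fun ⟨hq, hu⟩ => ⟨hu, (quantile_le_iff μ hu).mp hq⟩,
      fun ⟨hu, hq⟩ => ⟨(quantile_le_iff μ hu).mpr hq, hu⟩⟩
  rw [Measure.map_apply (measurable_quantile μ) measurableSet_Iic,
    Measure.restrict_apply (measurable_quantile μ measurableSet_Iic), hpre,
    measure_congr ((Ioo_ae_eq_Ioc (μ := volume)).inter (ae_eq_refl (Iic (cdf μ x)))),
    Ioc_inter_Iic, Real.volume_Ioc, min_eq_right (cdf_le_one μ x), sub_zero, ofReal_cdf]

end Quantile

section Coupling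

noncomputable def quantileCoupling (μ ν : Measure ℝ) (p : ℝ) : Measure (ℝ × ℝ) :=
  (volume.restrict (Ioo 0 1)).map fun u => (quantile μ u, quantile ν (1 - p + p * u))

noncomputable def dominatingCoupling (μ ν : Measure ℝ) (p : ℝ) : Measure (ℝ × ℝ) :=
  ENNReal.ofReal p • quantileCoupling μ ν p +
    μ.prod ((volume.restrict (Ioo 0 (1 - p))).map (quantile ν))

variable {μ ν : Measure ℝ} {p : ℝ}

lemma cdf_le_of_measure_Ioi_le [IsProbabilityMeasure μ] [IsProbabilityMeasure ν]
    (hp : 0 < p) (h : ∀ t : ℝ, (μ {x | t < x}).toReal ≤ (ν {x | t < x}).toReal / p)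
    (t : ℝ) : cdf ν t ≤ 1 - p + p * cdf μ t := by
  have hIoi : ∀ (ρ : Measure ℝ) [IsProbabilityMeasure ρ], (ρ {x | t < x}).toReal = 1 - cdf ρ t :=
    fun ρ _ => by
      rw [show {x | t < x} = (Iic t)ᶜ from compl_Iic.symm, ← measureReal_def,
        probReal_compl_eq_one_sub measurableSet_Iic, cdf_eq_real]
  have := h t
  rw [hIoi, hIoi, le_div_iff₀ hp] at this
  linarith

variable (μ ν p) in
lemma measurable_quantile_pair :
    Measurable fun u => (quantile μ u, quantile ν (1 - p + p * u)) :=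
  (measurable_quantile μ).prodMk ((measurable_quantile ν).comp (by fun_prop))

lemma map_fst_quantileCoupling [IsProbabilityMeasure μ] :
    (quantileCoupling μ ν p).map Prod.fst = μ := by
  rw [quantileCoupling, Measure.map_map measurable_fst (measurable_quantile_pair μ ν p)]
  exact map_quantile μ

lemma smul_map_snd_quantileCoupling (hp : 0 < p) :
    ENNReal.ofReal p • (quantileCoupling μ ν p).map Prod.snd =
      (volume.restrict (Ioo (1 - p) 1)).map (quantile ν) := by
  rw [quantileCoupling, Measure.map_map measurable_snd (measurable_quantile_pair μ ν p),
    show Prod.snd ∘ _ = quantile ν ∘ fun u => 1 - p + p * u from rfl,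
    ← Measure.map_map (measurable_quantile ν) (by fun_prop),
    Real.map_volume_restrict_Ioo_affine _ hp, Measure.map_smul, smul_smul,
    ← ENNReal.ofReal_mul hp.le, mul_inv_cancel₀ hp.ne', ENNReal.ofReal_one, one_smul,
    sub_add_cancel]

lemma quantile_le_quantile_of_cdf_le (hp : 0 < p) (hp1 : p ≤ 1)
    (h : ∀ t, cdf ν t ≤ 1 - p + p * cdf μ t) {u : ℝ} (hu : u ∈ Ioo 0 1) :
    quantile μ u ≤ quantile ν (1 - p + p * u) := by
  have hv : 1 - p + p * u ∈ Ioo 0 1 := ⟨by nlinarith [hu.1], by nlinarith [hu.2]⟩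
  rw [quantile_le_iff μ hu]
  exact le_of_mul_le_mul_left (by linarith [(le_cdf_quantile ν hv).trans (h _)]) hp

lemma ae_fst_le_snd_quantileCoupling (hp : 0 < p) (hp1 : p ≤ 1)
    (h : ∀ t, cdf ν t ≤ 1 - p + p * cdf μ t) :
    ∀ᵐ w ∂quantileCoupling μ ν p, w.1 ≤ w.2 := by
  rw [quantileCoupling, ae_map_iff (measurable_quantile_pair μ ν p).aemeasurable
    (measurableSet_le measurable_fst measurable_snd)]
  exact ae_restrict_of_forall_mem measurableSet_Ioo fun u hu =>
    quantile_le_quantile_of_cdf_le hp hp1 h hu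

lemma map_fst_dominatingCoupling [IsProbabilityMeasure μ] (hp : 0 ≤ p) (hp1 : p ≤ 1) :
    (dominatingCoupling μ ν p).map Prod.fst = μ := by
  rw [dominatingCoupling, Measure.map_add _ _ measurable_fst, Measure.map_smul,
    map_fst_quantileCoupling, Measure.map_fst_prod,
    Measure.map_apply (measurable_quantile ν) MeasurableSet.univ, preimage_univ,
    Measure.restrict_apply_univ, Real.volume_Ioo, sub_zero, ← add_smul,
    ← ENNReal.ofReal_add hp (by linarith), add_sub_cancel, ENNReal.ofReal_one, one_smul]

lemma isProbabilityMeasure_dominatingCoupling [IsProbabilityMeasure μ] (hp : 0 ≤ p)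
    (hp1 : p ≤ 1) : IsProbabilityMeasure (dominatingCoupling μ ν p) := by
  have : IsProbabilityMeasure ((dominatingCoupling μ ν p).map Prod.fst) := by
    rw [map_fst_dominatingCoupling hp hp1]; infer_instance
  exact Measure.isProbabilityMeasure_of_map Prod.fst

lemma map_snd_dominatingCoupling [IsProbabilityMeasure μ] [IsProbabilityMeasure ν]
    (hp : 0 < p) (hp1 : p ≤ 1) :
    (dominatingCoupling μ ν p).map Prod.snd = ν := by
  rw [dominatingCoupling, Measure.map_add _ _ measurable_snd, Measure.map_smul,
    smul_map_snd_quantileCoupling hp, Measure.map_snd_prod, measure_univ, one_smul,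
    ← Measure.map_add _ _ (measurable_quantile ν), add_comm,
    Real.volume_restrict_Ioo_add_Ioo (by linarith) (by linarith), map_quantile]

lemma mul_measureReal_le_dominatingCoupling [IsProbabilityMeasure μ] (hp : 0 < p) (hp1 : p ≤ 1)
    (h : ∀ t, cdf ν t ≤ 1 - p + p * cdf μ t) {A : Set ℝ} (hA : MeasurableSet A) :
    p * (dominatingCoupling μ ν p).real (Prod.fst ⁻¹' A) ≤
      (dominatingCoupling μ ν p).real ({w | w.1 ≤ w.2} ∩ Prod.fst ⁻¹' A) := by
  have hγ : quantileCoupling μ ν p ({w | w.1 ≤ w.2} ∩ Prod.fst ⁻¹' A) = μ A := by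
    rw [inter_comm, measure_inter_conull (ae_fst_le_snd_quantileCoupling hp hp1 h),
      ← Measure.map_apply measurable_fst hA, map_fst_quantileCoupling]
  have hle : ENNReal.ofReal p * μ A ≤
      dominatingCoupling μ ν p ({w | w.1 ≤ w.2} ∩ Prod.fst ⁻¹' A) := by
    rw [← hγ, dominatingCoupling, Measure.add_apply, Measure.smul_apply, smul_eq_mul]
    exact le_self_add
  have := isProbabilityMeasure_dominatingCoupling (μ := μ) (ν := ν) hp.le hp1
  rw [measureReal_def, measureReal_def, ← Measure.map_apply measurable_fst hA,
    map_fst_dominatingCoupling hp.le hp1]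
  simpa [ENNReal.toReal_mul, hp.le] using ENNReal.toReal_mono (measure_ne_top _ _) hle

end Coupling

end ProbabilityTheory

theorem stmt1 (μX μY : Measure ℝ) [IsProbabilityMeasure μX] [IsProbabilityMeasure μY]
    (p : ℝ) (hp : 0 < p) (hp1 : p ≤ 1)
    (h : ∀ t : ℝ, (μX {x | t < x}).toReal ≤ (μY {x | t < x}).toReal / p) :
    ∃ π : Measure (ℝ × ℝ), IsProbabilityMeasure π ∧
      π.map Prod.fst = μX ∧ π.map Prod.snd = μY ∧
      ∀ᵐ z ∂π, p ≤
        (π[Set.indicator {w : ℝ × ℝ | w.1 ≤ w.2} (fun _ => (1 : ℝ)) |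
          MeasurableSpace.comap Prod.fst inferInstance]) z := by
  have hcdf := cdf_le_of_measure_Ioi_le hp h
  have hfst := map_fst_dominatingCoupling (μ := μX) (ν := μY) hp.le hp1
  have hπ := isProbabilityMeasure_dominatingCoupling (μ := μX) (ν := μY) hp.le hp1
  exact ⟨_, hπ, hfst, map_snd_dominatingCoupling hp hp1,
    ae_le_condExp_indicator_comap_fst (measurableSet_le measurable_fst measurable_snd)
      fun A hA => mul_measureReal_le_dominatingCoupling hp hp1 hcdf hA⟩
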